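/- arXiv:1903.01398 — 2 statements merged into one kernel-verified Lean document; each statement's English description precedes it below -/
import Mathlib

section
/- For every integer n ≥ 1, ∑_{k=1}^{n} k²·C(n,k) = 2·C_{n+2} − 5·C_{n+1} + C_n. -/
/-- Ballot number `C(n,k) = (k/n) * binomial(2n-k-1, n-1)`. -/
def ballot (n k : ℕ) : ℕ := k * Nat.choose (2 * n - k - 1) (n - 1) / n



lemma ballot_cast (p k : ℕ) (h1 : 1 ≤ k) (h2 : k ≤ p + 1) :
    (ballot (p+1) k : ℤ) = (((2*p+1-k).choose p : ℕ) : ℤ) - (((2*p+1-k).choose (p+1) : ℕ) : ℤ) := by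
  have hm : 2 * (p+1) - k - 1 = 2*p+1-k := by omega
  set m := 2*p+1-k with hmdef
  set c := m.choose p with hc
  set c' := m.choose (p+1) with hc'
  have hr : c' * (p+1) = c * (m - p) := Nat.choose_succ_right_eq m p
  have hmp : m - p = p + 1 - k := by omega
  rw [hmp] at hr
  have h3 : (p+1) * c = (p+1) * c' + k * c := by
    have e1 : (p+1) * c' = (p+1-k) * c := by rw [mul_comm, hr, mul_comm]
    have e2 : (p+1-k) * c + k * c = (p+1) * c := by
      rw [← Nat.add_mul]; congr 1; omega
    omega
  have hcc : c' ≤ c := by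
    have := Nat.le_of_mul_le_mul_left (show (p+1)*c' ≤ (p+1)*c by omega) (Nat.succ_pos p)
    exact this
  have hkey : k * c = (p+1) * (c - c') := by
    rw [Nat.mul_sub]
    omega
  have hb : ballot (p+1) k = c - c' := by
    unfold ballot
    rw [hm, Nat.add_sub_cancel, ← hc, hkey]
    exact Nat.mul_div_cancel_left _ (Nat.succ_pos p)
  rw [hb]
  push_cast [hcc]
  ring

lemma P1 (m r : ℕ) : ((m : ℤ) + 1) * (m.choose r : ℤ) = ((r : ℤ) + 1) * ((m+1).choose (r+1) : ℤ) := by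
  have := Nat.add_one_mul_choose_eq m r
  push_cast [Nat.succ_eq_add_one] at this
  linarith [this]

lemma hockey (a r : ℕ) : ∀ N : ℕ, ∑ i ∈ Finset.range N, (((a+i).choose r : ℕ) : ℤ)
    = (((a+N).choose (r+1) : ℕ) : ℤ) - ((a.choose (r+1) : ℕ) : ℤ) := by
  intro N
  induction N with
  | zero => simp
  | succ N ih =>
    rw [Finset.sum_range_succ, ih]
    have : (a + (N+1)).choose (r+1) = (a+N).choose r + (a+N).choose (r+1) := by
      rw [show a + (N+1) = (a+N)+1 from rfl]
      exact Nat.choose_succ_succ _ _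
    rw [this]
    push_cast
    ring

lemma expand (p i r : ℕ) :
    ((p : ℤ) + 1 - i)^2 * ((p+i).choose r : ℤ)
      = ((r:ℤ)+1)*((r:ℤ)+2) * ((p+i+2).choose (r+2) : ℤ)
        - ((r:ℤ)+1)*(4*(p:ℤ)+5) * ((p+i+1).choose (r+1) : ℤ)
        + 4*((p:ℤ)+1)^2 * ((p+i).choose r : ℤ) := by
  have e1 := P1 (p+i) r
  have e2 := P1 (p+i+1) (r+1)
  push_cast at e1 e2
  linear_combination ((i:ℤ) - 3*((p:ℤ)+1)) * e1 + ((r:ℤ)+1) * e2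

lemma sumpart (p r : ℕ) :
    ∑ i ∈ Finset.range (p+1), ((p:ℤ)+1-i)^2 * ((p+i).choose r : ℤ)
      = ((r:ℤ)+1)*((r:ℤ)+2) * (((2*p+3).choose (r+3) : ℤ) - ((p+2).choose (r+3) : ℤ))
        - ((r:ℤ)+1)*(4*(p:ℤ)+5) * (((2*p+2).choose (r+2) : ℤ) - ((p+1).choose (r+2) : ℤ))
        + 4*((p:ℤ)+1)^2 * (((2*p+1).choose (r+1) : ℤ) - (p.choose (r+1) : ℤ)) := by
  rw [Finset.sum_congr rfl (fun i _ => expand p i r)]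
  rw [Finset.sum_add_distrib, Finset.sum_sub_distrib, ← Finset.mul_sum, ← Finset.mul_sum,
    ← Finset.mul_sum]
  have A : ∑ i ∈ Finset.range (p+1), (((p+i+2).choose (r+2) : ℕ) : ℤ)
      = ((2*p+3).choose (r+3) : ℤ) - ((p+2).choose (r+3) : ℤ) := by
    have := hockey (p+2) (r+2) (p+1)
    simpa [show p+2+(p+1) = 2*p+3 by omega, show ∀ i : ℕ, p+2+i = p+i+2 from fun i => by omega,
      show r+2+1 = r+3 from rfl] using this
  have B : ∑ i ∈ Finset.range (p+1), (((p+i+1).choose (r+1) : ℕ) : ℤ)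
      = ((2*p+2).choose (r+2) : ℤ) - ((p+1).choose (r+2) : ℤ) := by
    have := hockey (p+1) (r+1) (p+1)
    simpa [show p+1+(p+1) = 2*p+2 by omega, show ∀ i : ℕ, p+1+i = p+i+1 from fun i => by omega,
      show r+1+1 = r+2 from rfl] using this
  have C : ∑ i ∈ Finset.range (p+1), (((p+i).choose r : ℕ) : ℤ)
      = ((2*p+1).choose (r+1) : ℤ) - (p.choose (r+1) : ℤ) := by
    have := hockey p r (p+1)
    simpa [show p+(p+1) = 2*p+1 by omega] using this
  rw [A, B, C]

/-- `(m+1) C(m,r) = (r+1) C(m+1,r+1)` in ℚ. -/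
lemma P1Q (m r : ℕ) : ((m : ℚ) + 1) * (m.choose r : ℚ) = ((r : ℚ) + 1) * ((m+1).choose (r+1) : ℚ) := by
  have h0 := Nat.add_one_mul_choose_eq m r
  have h : ((m:ℚ)+1) * (m.choose r : ℚ) = ((m+1).choose (r+1) : ℚ) * ((r:ℚ)+1) := by
    exact_mod_cast h0
  linear_combination h

/-- `(k+1) C(n,k+1) = j C(n,k)` when `n - k = j`, in ℚ. -/
lemma chooseRQ (n k j : ℕ) (h : n - k = j) :
    (n.choose (k+1) : ℚ) * ((k : ℚ)+1) = (n.choose k : ℚ) * (j : ℚ) := by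
  have := Nat.choose_succ_right_eq n k
  rw [h] at this
  exact_mod_cast this

lemma final (p : ℕ) :
    ((p:ℤ)+1)*((p:ℤ)+2) * ((2*p+3).choose (p+3) : ℤ)
      - ((p:ℤ)+1)*(4*(p:ℤ)+5) * ((2*p+2).choose (p+2) : ℤ)
      + 4*((p:ℤ)+1)^2 * ((2*p+1).choose (p+1) : ℤ)
      - (((p:ℤ)+2)*((p:ℤ)+3) * ((2*p+3).choose (p+4) : ℤ)
        - ((p:ℤ)+2)*(4*(p:ℤ)+5) * ((2*p+2).choose (p+3) : ℤ)
        + 4*((p:ℤ)+1)^2 * ((2*p+1).choose (p+2) : ℤ))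
      = 2 * catalan (p+3) - 5 * catalan (p+2) + catalan (p+1) := by
  have key : ((p:ℚ)+1)*((p:ℚ)+2) * ((2*p+3).choose (p+3) : ℚ)
      - ((p:ℚ)+1)*(4*(p:ℚ)+5) * ((2*p+2).choose (p+2) : ℚ)
      + 4*((p:ℚ)+1)^2 * ((2*p+1).choose (p+1) : ℚ)
      - (((p:ℚ)+2)*((p:ℚ)+3) * ((2*p+3).choose (p+4) : ℚ)
        - ((p:ℚ)+2)*(4*(p:ℚ)+5) * ((2*p+2).choose (p+3) : ℚ)
        + 4*((p:ℚ)+1)^2 * ((2*p+1).choose (p+2) : ℚ))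
      = 2 * (catalan (p+3) : ℚ) - 5 * (catalan (p+2) : ℚ) + (catalan (p+1) : ℚ) := by
    set P : ℚ := (p : ℚ) with hP
    have hP2 : P + 2 ≠ 0 := by positivity
    have hP3 : P + 3 ≠ 0 := by positivity
    have hP4 : P + 4 ≠ 0 := by positivity
    set d : ℚ := ((2*p+1).choose p : ℚ) with hd
    -- symmetry: C(2p+1,p+1) = d
    have ed3 : ((2*p+1).choose (p+1) : ℚ) = d := by
      have h := Nat.choose_symm (show p+1 ≤ 2*p+1 by omega)
      rw [show 2*p+1-(p+1) = p by omega] at h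
      rw [hd]
      exact_mod_cast h.symm
    -- Pascal: C(2p+2,p+1) = 2d
    have eb : ((2*p+2).choose (p+1) : ℚ) = 2 * d := by
      have h : (2*p+2).choose (p+1) = (2*p+1).choose p + (2*p+1).choose (p+1) := by
        rw [show 2*p+2 = (2*p+1)+1 by omega]
        exact Nat.choose_succ_succ' _ _
      have h' : ((2*p+2).choose (p+1) : ℚ) = ((2*p+1).choose p : ℚ) + ((2*p+1).choose (p+1) : ℚ) := by
        exact_mod_cast h
      rw [ed3] at h'; linarith [h']
    have Ex2 : ((2*p+2).choose (p+2) : ℚ) * (P+2) = 2*d*(P+1) := by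
      have h := chooseRQ (2*p+2) (p+1) (p+1) (by omega)
      push_cast at h
      linear_combination h + (P+1)*eb
    have Ex5 : ((2*p+2).choose (p+3) : ℚ) * ((P+2)*(P+3)) = 2*d*P*(P+1) := by
      have h := chooseRQ (2*p+2) (p+2) p (by omega)
      push_cast at h
      linear_combination (P+2)*h + P*Ex2
    have Ey : ((2*p+3).choose (p+2) : ℚ) * (P+2) = 2*d*(2*P+3) := by
      have h := P1Q (2*p+2) (p+1)
      rw [show 2*p+2+1 = 2*p+3 by omega, show p+1+1 = p+2 by omega] at h
      push_cast at h
      linear_combination -h + (2*P+3)*eb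
    have Ex1 : ((2*p+3).choose (p+3) : ℚ) * ((P+2)*(P+3)) = 2*d*(P+1)*(2*P+3) := by
      have h := chooseRQ (2*p+3) (p+2) (p+1) (by omega)
      push_cast at h
      linear_combination (P+2)*h + (P+1)*Ey
    have Ex4 : ((2*p+3).choose (p+4) : ℚ) * ((P+2)*(P+3)*(P+4)) = 2*d*P*(P+1)*(2*P+3) := by
      have h := chooseRQ (2*p+3) (p+3) p (by omega)
      push_cast at h
      linear_combination (P+2)*(P+3)*h + P*Ex1
    have Ex6 : ((2*p+1).choose (p+2) : ℚ) * (P+2) = d*P := by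
      have h := chooseRQ (2*p+1) (p+1) p (by omega)
      push_cast at h
      linear_combination h + P*ed3
    have ey' : ((2*p+3).choose (p+1) : ℚ) = ((2*p+3).choose (p+2) : ℚ) := by
      have h := Nat.choose_symm (show p+2 ≤ 2*p+3 by omega)
      rw [show 2*p+3-(p+2) = p+1 by omega] at h
      exact_mod_cast h
    have Ez : ((2*p+4).choose (p+2) : ℚ) * (P+2) = 4*d*(2*P+3) := by
      apply mul_right_cancel₀ hP2
      have h := P1Q (2*p+3) (p+1)
      rw [show 2*p+3+1 = 2*p+4 by omega, show p+1+1 = p+2 by omega] at h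
      push_cast at h
      linear_combination -(P+2)*h + (2*P+4)*(P+2)*ey' + (2*P+4)*Ey
    have Ev : ((2*p+5).choose (p+3) : ℚ) * ((P+2)*(P+3)) = 4*d*(2*P+3)*(2*P+5) := by
      have h := P1Q (2*p+4) (p+2)
      rw [show 2*p+4+1 = 2*p+5 by omega, show p+2+1 = p+3 by omega] at h
      push_cast at h
      linear_combination -(P+2)*h + (2*P+5)*Ez
    have ev' : ((2*p+5).choose (p+2) : ℚ) = ((2*p+5).choose (p+3) : ℚ) := by
      have h := Nat.choose_symm (show p+3 ≤ 2*p+5 by omega)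
      rw [show 2*p+5-(p+3) = p+2 by omega] at h
      exact_mod_cast h
    have Ew : ((2*p+6).choose (p+3) : ℚ) * ((P+2)*(P+3)) = 8*d*(2*P+3)*(2*P+5) := by
      apply mul_right_cancel₀ hP3
      have h := P1Q (2*p+5) (p+2)
      rw [show 2*p+5+1 = 2*p+6 by omega, show p+2+1 = p+3 by omega] at h
      push_cast at h
      linear_combination -(P+2)*(P+3)*h + (2*P+6)*(P+2)*(P+3)*ev' + (2*P+6)*Ev
    have Ec1 : (catalan (p+1) : ℚ) * (P+2) = 2*d := by
      have h := succ_mul_catalan_eq_centralBinom (p+1)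
      rw [Nat.centralBinom, show 2*(p+1) = 2*p+2 by omega] at h
      have h' : ((p:ℚ)+2) * (catalan (p+1) : ℚ) = ((2*p+2).choose (p+1) : ℚ) := by
        exact_mod_cast h
      linear_combination h' + eb
    have Ec2 : (catalan (p+2) : ℚ) * ((P+2)*(P+3)) = 4*d*(2*P+3) := by
      have h := succ_mul_catalan_eq_centralBinom (p+2)
      rw [Nat.centralBinom, show 2*(p+2) = 2*p+4 by omega] at h
      have h' : ((p:ℚ)+3) * (catalan (p+2) : ℚ) = ((2*p+4).choose (p+2) : ℚ) := by
        exact_mod_cast h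
      linear_combination (P+2)*h' + Ez
    have Ec3 : (catalan (p+3) : ℚ) * ((P+2)*(P+3)*(P+4)) = 8*d*(2*P+3)*(2*P+5) := by
      have h := succ_mul_catalan_eq_centralBinom (p+3)
      rw [Nat.centralBinom, show 2*(p+3) = 2*p+6 by omega] at h
      have h' : ((p:ℚ)+4) * (catalan (p+3) : ℚ) = ((2*p+6).choose (p+3) : ℚ) := by
        exact_mod_cast h
      linear_combination (P+2)*(P+3)*h' + Ew
    apply mul_right_cancel₀ (show (P+2)*(P+3)*(P+4) ≠ 0 by positivity)
    linear_combination (P+1)*(P+2)*(P+4) * Ex1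
      - (P+1)*(4*P+5)*(P+3)*(P+4) * Ex2
      + 4*(P+1)^2*(P+2)*(P+3)*(P+4) * ed3
      - (P+2)*(P+3) * Ex4
      + (P+2)*(4*P+5)*(P+4) * Ex5
      - 4*(P+1)^2*(P+3)*(P+4) * Ex6
      - 2*Ec3 + 5*(P+4)*Ec2 - (P+3)*(P+4)*Ec1
  exact_mod_cast key

/-- For every integer `n ≥ 1`, `∑_{k=1}^{n} k²·C(n,k) = 2·C_{n+2} - 5·C_{n+1} + C_n`. -/
theorem sum_sq_mul_ballot_eq (n : ℕ) (hn : 1 ≤ n) :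
    (∑ k ∈ Finset.Icc 1 n, ((k : ℤ) ^ 2 * ballot n k)) =
      2 * catalan (n + 2) - 5 * catalan (n + 1) + catalan n := by
  obtain ⟨p, rfl⟩ : ∃ p, n = p + 1 := ⟨n - 1, by omega⟩
  have step1 : (∑ k ∈ Finset.Icc 1 (p+1), ((k : ℤ) ^ 2 * ballot (p+1) k))
      = ∑ i ∈ Finset.range (p+1),
          ((p:ℤ)+1-(i:ℤ))^2 * (((p+i).choose p : ℤ) - ((p+i).choose (p+1) : ℤ)) := by
    refine Finset.sum_nbij' (i := fun k => p + 1 - k) (j := fun i => p + 1 - i) ?_ ?_ ?_ ?_ ?_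
    · intro k hk
      simp only [Finset.mem_Icc] at hk
      simp only [Finset.mem_range]
      omega
    · intro i hi
      simp only [Finset.mem_range] at hi
      simp only [Finset.mem_Icc]
      omega
    · intro k hk
      simp only [Finset.mem_Icc] at hk
      omega
    · intro i hi
      simp only [Finset.mem_range] at hi
      omega
    · intro k hk
      simp only [Finset.mem_Icc] at hk
      rw [ballot_cast p k hk.1 hk.2]
      rw [show p + (p + 1 - k) = 2*p+1-k by omega]
      have h2 : ((p:ℤ)+1-((p+1-k : ℕ):ℤ)) = (k:ℤ) := by
        have h3 : ((p+1-k : ℕ):ℤ) = (p:ℤ)+1-(k:ℤ) := by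
          have := hk.2
          push_cast [this]
          ring
        rw [h3]; ring
      rw [h2]
  rw [step1]
  have split : ∑ i ∈ Finset.range (p+1),
        ((p:ℤ)+1-(i:ℤ))^2 * (((p+i).choose p : ℤ) - ((p+i).choose (p+1) : ℤ))
      = (∑ i ∈ Finset.range (p+1), ((p:ℤ)+1-(i:ℤ))^2 * ((p+i).choose p : ℤ))
        - ∑ i ∈ Finset.range (p+1), ((p:ℤ)+1-(i:ℤ))^2 * ((p+i).choose (p+1) : ℤ) := by
    rw [← Finset.sum_sub_distrib]
    exact Finset.sum_congr rfl fun i _ => by ring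
  rw [split, sumpart p p, sumpart p (p+1)]
  have z1 : (p+2).choose (p+3) = 0 := Nat.choose_eq_zero_of_lt (by omega)
  have z2 : (p+1).choose (p+2) = 0 := Nat.choose_eq_zero_of_lt (by omega)
  have z3 : p.choose (p+1) = 0 := Nat.choose_eq_zero_of_lt (by omega)
  have z4 : (p+2).choose (p+1+3) = 0 := Nat.choose_eq_zero_of_lt (by omega)
  have z5 : (p+1).choose (p+1+2) = 0 := Nat.choose_eq_zero_of_lt (by omega)
  have z6 : p.choose (p+1+1) = 0 := Nat.choose_eq_zero_of_lt (by omega)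
  rw [z1, z2, z3, z4, z5, z6]
  have hfin := final p
  rw [show p+1+3 = p+4 from rfl, show p+1+2 = p+3 from rfl, show p+1+1 = p+2 from rfl,
    show (p+1)+2 = p+3 from rfl]
  push_cast
  push_cast at hfin
  linear_combination hfin
end

section
/- For every integer x ≥ 0, F(4, x) = (x + ε_x)/4, where ε_x = 4 if x ≡ 0 (mod 4), ε_x = 7 if x ≡ 1 (mod 4), ε_x = 6 if x ≡ 2 (mod 4), and ε_x = 13 if x ≡ 3 (mod 4). -/
/-- The sequence `x₁ = x, x₂ = y`, and for `i ≥ 3`, `xᵢ` is the least nonnegative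
residue of `-x_{i-2}` modulo `x_{i-1}` (with `xᵢ = 0` when `x_{i-1} = 0`);
the value at index `0` is junk. -/
def cpSeq (x y : ℕ) : ℕ → ℕ
  | 0 => 0
  | 1 => x
  | 2 => y
  | (i + 3) =>
      (cpSeq x y (i + 2) - cpSeq x y (i + 1) % cpSeq x y (i + 2)) % cpSeq x y (i + 2)

/-- `Fcp x y` is the largest index `i` with `xᵢ > 0`. -/
noncomputable def Fcp (x y : ℕ) : ℕ := sSup {i : ℕ | 0 < cpSeq x y i}

def Nval (x : ℕ) : ℕ :=
  (x + (if x % 4 = 0 then 4 else if x % 4 = 1 then 7 else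
        if x % 4 = 2 then 6 else 13)) / 4

lemma cpSeq_succ_eq_zero {x y n : ℕ} (hn : 2 ≤ n) (h : cpSeq x y n = 0) :
    cpSeq x y (n + 1) = 0 := by
  obtain ⟨i, rfl⟩ : ∃ i, n = i + 2 := ⟨n - 2, by omega⟩
  show cpSeq x y (i + 3) = 0
  simp only [cpSeq] at h ⊢
  rw [h]
  simp

lemma Fcp_eq {x y N : ℕ} (hN : 1 ≤ N) (hpos : 0 < cpSeq x y N)
    (hzero : cpSeq x y (N + 1) = 0) : Fcp x y = N := by
  have hall : ∀ i, N < i → cpSeq x y i = 0 := by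
    intro i
    induction i with
    | zero => intro h; omega
    | succ j ih =>
      intro hi
      rcases Nat.lt_or_ge N j with h | h
      · exact cpSeq_succ_eq_zero (by omega) (ih h)
      · have hj : j = N := by omega
        subst hj; exact hzero
  have hmem : N ∈ {i : ℕ | 0 < cpSeq x y i} := hpos
  have hbdd : BddAbove {i : ℕ | 0 < cpSeq x y i} := by
    refine ⟨N, fun i hi => ?_⟩
    by_contra hc
    push_neg at hc
    have := hall i hc
    simp only [Set.mem_setOf_eq] at hi
    omega
  refine le_antisymm (csSup_le ⟨N, hmem⟩ fun i hi => ?_) (le_csSup hbdd hmem)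
  by_contra hc
  push_neg at hc
  have := hall i hc
  simp only [Set.mem_setOf_eq] at hi
  omega

lemma cpSeq_shift (y : ℕ) : ∀ i, cpSeq 4 (y + 4) (i + 3) = cpSeq 4 y (i + 2) := by
  intro i
  induction i using Nat.strong_induction_on with
  | _ i ih =>
    match i with
    | 0 =>
      show cpSeq 4 (y + 4) 3 = cpSeq 4 y 2
      simp only [cpSeq]
      rcases y with _ | z
      · decide
      · have m1 : 4 % (z + 1 + 4) = 4 := Nat.mod_eq_of_lt (by omega)
        rw [m1]
        have m2 : z + 1 + 4 - 4 = z + 1 := by omega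
        rw [m2, Nat.mod_eq_of_lt (by omega)]
    | 1 =>
      have h0 := ih 0 (by omega)
      show cpSeq 4 (y + 4) 4 = cpSeq 4 y 3
      have e1 : cpSeq 4 (y + 4) 4 = (cpSeq 4 (y + 4) 3 - cpSeq 4 (y + 4) 2 %
          cpSeq 4 (y + 4) 3) % cpSeq 4 (y + 4) 3 := rfl
      have e2 : cpSeq 4 y 3 = (cpSeq 4 y 2 - cpSeq 4 y 1 % cpSeq 4 y 2) %
          cpSeq 4 y 2 := rfl
      have h2 : cpSeq 4 (y + 4) 2 = y + 4 := rfl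
      have h3 : cpSeq 4 y 2 = y := rfl
      have h4 : cpSeq 4 y 1 = 4 := rfl
      have h0' : cpSeq 4 (y + 4) 3 = y := by rw [ih 0 (by omega)]; rfl
      rw [e1, e2, h2, h3, h4, h0', Nat.add_mod_left]
    | (j + 2) =>
      have h1 := ih j (by omega)
      have h2 := ih (j + 1) (by omega)
      show cpSeq 4 (y + 4) (j + 5) = cpSeq 4 y (j + 4)
      have e1 : cpSeq 4 (y + 4) (j + 5) = (cpSeq 4 (y + 4) (j + 4) -
          cpSeq 4 (y + 4) (j + 3) % cpSeq 4 (y + 4) (j + 4)) % cpSeq 4 (y + 4) (j + 4) := rfl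
      have e2 : cpSeq 4 y (j + 4) = (cpSeq 4 y (j + 3) -
          cpSeq 4 y (j + 2) % cpSeq 4 y (j + 3)) % cpSeq 4 y (j + 3) := rfl
      rw [e1, e2, h1, h2]

lemma key : ∀ x : ℕ, 0 < cpSeq 4 x (Nval x) ∧ cpSeq 4 x (Nval x + 1) = 0 := by
  intro x
  induction x using Nat.strong_induction_on with
  | _ x ih =>
    match x with
    | 0 => exact ⟨by decide, by decide⟩
    | 1 => exact ⟨by decide, by decide⟩
    | 2 => exact ⟨by decide, by decide⟩
    | 3 => exact ⟨by decide, by decide⟩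
    | 4 => exact ⟨by decide, by decide⟩
    | (z + 5) =>
      obtain ⟨hpos, hzero⟩ := ih (z + 1) (by omega)
      have hge : 2 ≤ Nval (z + 1) := by unfold Nval; split_ifs <;> omega
      obtain ⟨i, hi⟩ : ∃ i, Nval (z + 1) = i + 2 := ⟨Nval (z + 1) - 2, by omega⟩
      have hN : Nval (z + 5) = Nval (z + 1) + 1 := by unfold Nval; split_ifs <;> omega
      have hz5 : z + 5 = (z + 1) + 4 := rfl
      constructor
      · rw [hN, hi, hz5, cpSeq_shift (z + 1) i, ← hi]
        exact hpos
      · rw [hN, hi, hz5]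
        have := cpSeq_shift (z + 1) (i + 1)
        rw [show i + 2 + 1 + 1 = i + 1 + 3 from rfl, this, show i + 1 + 2 = i + 2 + 1 from rfl,
          ← hi]
        exact hzero

/-- For every integer `x ≥ 0`, `F(4, x) = (x + ε_x)/4`, where `ε_x = 4, 7, 6, 13`
according as `x ≡ 0, 1, 2, 3 (mod 4)`. -/
theorem Fcp_four (x : ℕ) :
    Fcp 4 x =
      (x + (if x % 4 = 0 then 4 else if x % 4 = 1 then 7 else
        if x % 4 = 2 then 6 else 13)) / 4 := by
  obtain ⟨hpos, hzero⟩ := key x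
  exact Fcp_eq (N := Nval x) (by unfold Nval; split_ifs <;> omega) hpos hzero
end
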